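/- arXiv:1602.05478 — 2 statements merged into one kernel-verified Lean document; each statement's English description precedes it below -/
import Mathlib

section
/- Let Q be a lower transition rate operator on a finite nonempty set 𝒳, with conjugate Q̄ f := −Q(−f), and let (T_t)_{t≥0} be the associated family of operators determined by the differential equation d/dt T_t f = Q(T_t f) with T_0 f = f, and T̄_t f := −T_t(−f). Then for any t > 0 and any x, y ∈ 𝒳: T̄_t 𝟙_x(y) > 0 if and only if x is upper reachable from y, i.e. if and only if there is a finite sequence y = x_0, x_1, …, x_n = x (n ≥ 0) with x_k ≠ x_{k−1} and Q̄(𝟙_{x_k})(x_{k−1}) > 0 for all k ∈ {1,…,n}. -/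
open Filter Topology

/-- The minimum of a real-valued function on a finite nonempty type. -/
noncomputable def minf {X : Type*} [Fintype X] [Nonempty X] (f : X → ℝ) : ℝ :=
  Finset.univ.inf' Finset.univ_nonempty f

/-- The maximum of a real-valued function on a finite nonempty type. -/
noncomputable def maxf {X : Type*} [Fintype X] [Nonempty X] (f : X → ℝ) : ℝ :=
  Finset.univ.sup' Finset.univ_nonempty f

/-- The (real-valued) indicator function of a set. -/
noncomputable def ind {X : Type*} (A : Set X) : X → ℝ := A.indicator 1

/-- The conjugate (upper) operator `f ↦ -(Q (-f))`. -/
def conjOp {X : Type*} (Q : (X → ℝ) → (X → ℝ)) : (X → ℝ) → (X → ℝ) :=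
  fun f => -(Q (-f))

/-- A lower transition rate operator. -/
def IsLTRO {X : Type*} [Fintype X] (Q : (X → ℝ) → (X → ℝ)) : Prop :=
  (∀ μ : ℝ, Q (fun _ => μ) = 0) ∧
  (∀ f g : X → ℝ, Q f + Q g ≤ Q (f + g)) ∧
  (∀ l : ℝ, 0 ≤ l → ∀ f : X → ℝ, Q (l • f) = l • Q f) ∧
  (∀ x y : X, x ≠ y → 0 ≤ Q (ind {y}) x)

/-- A lower transition operator. -/
def IsLTO {X : Type*} [Fintype X] [Nonempty X] (T : (X → ℝ) → (X → ℝ)) : Prop :=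
  (∀ f : X → ℝ, ∀ x : X, minf f ≤ T f x) ∧
  (∀ f g : X → ℝ, T f + T g ≤ T (f + g)) ∧
  (∀ l : ℝ, 0 ≤ l → ∀ f : X → ℝ, T (l • f) = l • T f)

/-- `T` is the family of operators solving `d/dt T_t f = Q (T_t f)` on `[0,∞)`
with `T_0 f = f`. -/
def IsSol {X : Type*} [Fintype X] (Q : (X → ℝ) → (X → ℝ))
    (T : ℝ → (X → ℝ) → (X → ℝ)) : Prop :=
  (∀ f : X → ℝ, T 0 f = f) ∧
  (∀ f : X → ℝ, ∀ t : ℝ, 0 ≤ t →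
    HasDerivWithinAt (fun s => T s f) (Q (T t f)) (Set.Ici 0) t)

/-- Ergodicity of a lower transition rate operator, expressed via its
associated time-dependent family `T`. -/
def ErgodicQ {X : Type*} [Fintype X] (T : ℝ → (X → ℝ) → (X → ℝ)) : Prop :=
  ∀ f : X → ℝ, ∃ c : ℝ, Tendsto (fun t => T t f) atTop (𝓝 (fun _ : X => c))

/-- Ergodicity of a lower transition operator. -/
def ErgodicT {X : Type*} [Fintype X] (T : (X → ℝ) → (X → ℝ)) : Prop :=
  ∀ f : X → ℝ, ∃ c : ℝ, Tendsto (fun n : ℕ => T^[n] f) atTop (𝓝 (fun _ : X => c))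

/-- `x` is upper reachable from `y` (w.r.t. the lower transition rate operator `Q`). -/
def upperReach {X : Type*} [Fintype X] (Q : (X → ℝ) → (X → ℝ)) (y x : X) : Prop :=
  ∃ (n : ℕ) (p : ℕ → X), p 0 = y ∧ p n = x ∧
    ∀ k : ℕ, k < n → p (k + 1) ≠ p k ∧ 0 < conjOp Q (ind {p (k + 1)}) (p k)

/-- One step of the lower-reachability construction: `A ↦ A ∪ {y ∉ A : Q(𝟙_A)(y) > 0}`. -/
def lowerStep {X : Type*} [Fintype X] (Q : (X → ℝ) → (X → ℝ)) (A : Set X) : Set X :=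
  A ∪ {y : X | y ∉ A ∧ 0 < Q (ind A) y}

/-- `A` is lower reachable from `x`: `x ∈ Aₙ` where `n` is the first index with
`Aₙ = Aₙ₊₁` (equivalently, any such index, since the sequence is determined by
recursion and increasing). -/
def lowerReach {X : Type*} [Fintype X] (Q : (X → ℝ) → (X → ℝ)) (x : X) (A : Set X) : Prop :=
  ∃ n : ℕ, (lowerStep Q)^[n] A = (lowerStep Q)^[n + 1] A ∧ x ∈ (lowerStep Q)^[n] A

/-- The set `𝒳_RA := {x : ∃ n ≥ 1, min T̄ⁿ 𝟙ₓ > 0}`. -/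
noncomputable def XRA {X : Type*} [Fintype X] [Nonempty X]
    (T : (X → ℝ) → (X → ℝ)) : Set X :=
  {x : X | ∃ n : ℕ, 0 < minf ((conjOp T)^[n + 1] (ind {x}))}

/-- A regularly absorbing lower transition operator. -/
def RegAbs {X : Type*} [Fintype X] [Nonempty X] (T : (X → ℝ) → (X → ℝ)) : Prop :=
  (XRA T).Nonempty ∧ ∀ x : X, x ∉ XRA T → ∃ n : ℕ, 0 < T^[n + 1] (ind (XRA T)) x

/-- The set `𝒳_1A := {x : min T̄ 𝟙ₓ > 0}`. -/
noncomputable def X1A {X : Type*} [Fintype X] [Nonempty X]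
    (T : (X → ℝ) → (X → ℝ)) : Set X :=
  {x : X | 0 < minf (conjOp T (ind {x}))}

/-- A 1-step absorbing lower transition operator. -/
def OneStepAbs {X : Type*} [Fintype X] [Nonempty X] (T : (X → ℝ) → (X → ℝ)) : Prop :=
  (X1A T).Nonempty ∧ ∀ x : X, x ∉ X1A T → 0 < T (ind (X1A T)) x

/-- The operator (sup) norm of a non-negatively homogeneous operator. -/
noncomputable def opN {X : Type*} [Fintype X] (Q : (X → ℝ) → (X → ℝ)) : ℝ :=
  sSup {r : ℝ | ∃ f : X → ℝ, ‖f‖ = 1 ∧ r = ‖Q f‖}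


/-!
`T̄_s 𝟙_x` solves `v' = Q̄ v`, `v 0 = 𝟙_x`, and stays nonnegative because the maximum of a
solution of `u' = Q u` cannot increase (`Q u ≤ 0` at a maximiser of `u`). For nonnegative `v`,
subadditivity of `Q̄` bounds `Q̄ v w` above by `∑ z, v z * Q̄ 𝟙_z w`, and superadditivity of `Q`
bounds it below by `v z * Q̄ 𝟙_z w + v w * Q 𝟙_w w`. The upper bound makes the total mass of `v`
outside the set of states from which `x` is upper reachable satisfy a Gronwall inequality starting
at `0`, so it stays `0`. The lower bound makes `exp (c s) * v s w` nondecreasing, and strictly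
increasing once some `z` with `Q̄ 𝟙_z w > 0` carries positive mass, so positivity spreads backwards
along every upper-reachability path.
-/

section Indicator

variable {X : Type*}

@[simp]
lemma ind_singleton_self (z : X) : ind ({z} : Set X) z = 1 := by
  simp [ind]

lemma ind_singleton_of_ne {z w : X} (h : w ≠ z) : ind ({z} : Set X) w = 0 := by
  simp [ind, h]

lemma ind_singleton_nonneg (z : X) : 0 ≤ ind ({z} : Set X) :=
  Set.indicator_nonneg fun _ _ => zero_le_one

lemma sum_smul_ind_singleton [Fintype X] (f : X → ℝ) : ∑ z, f z • ind ({z} : Set X) = f := by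
  classical
  ext w
  simp [Finset.sum_apply, ind, Pi.single_apply]

end Indicator

namespace IsLTRO

variable {X : Type*} [Fintype X] {Q : (X → ℝ) → (X → ℝ)}

lemma map_zero (hQ : IsLTRO Q) : Q 0 = 0 := hQ.1 0

lemma le_conjOp (hQ : IsLTRO Q) (f : X → ℝ) : Q f ≤ conjOp Q f := by
  have h := hQ.2.1 f (-f)
  rw [add_neg_cancel, hQ.map_zero] at h
  exact le_neg_iff_add_nonpos_right.2 h

lemma conjOp_smul (hQ : IsLTRO Q) {a : ℝ} (ha : 0 ≤ a) (f : X → ℝ) :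
    conjOp Q (a • f) = a • conjOp Q f := by
  simp only [conjOp, ← smul_neg, hQ.2.2.1 a ha]

lemma conjOp_add_map_le (hQ : IsLTRO Q) (f g : X → ℝ) : conjOp Q f + Q g ≤ conjOp Q (f + g) := by
  have h := hQ.2.1 (-(f + g)) g
  rw [show -(f + g) + g = -f by abel] at h
  intro w
  have hw := h w
  simp only [conjOp, Pi.add_apply, Pi.neg_apply] at hw ⊢
  linarith

lemma conjOp_add_le (hQ : IsLTRO Q) (f g : X → ℝ) :
    conjOp Q (f + g) ≤ conjOp Q f + conjOp Q g := by
  have h := hQ.2.1 (-f) (-g)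
  rw [← neg_add] at h
  intro w
  have hw := h w
  simp only [conjOp, Pi.add_apply, Pi.neg_apply] at hw ⊢
  linarith

lemma sum_map_le_map_sum (hQ : IsLTRO Q) {ι : Type*} (s : Finset ι) (g : ι → X → ℝ) :
    ∑ i ∈ s, Q (g i) ≤ Q (∑ i ∈ s, g i) := by
  simpa using Finset.le_sum_of_subadditive (fun f => -Q f) (by simp [hQ.map_zero])
    (fun f g => by simpa [add_comm] using hQ.2.1 f g) s g

lemma mul_apply_ind_self_le (hQ : IsLTRO Q) {h : X → ℝ} (hh : 0 ≤ h) (x : X) :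
    h x * Q (ind {x}) x ≤ Q h x := by
  classical
  have hsum := hQ.sum_map_le_map_sum Finset.univ fun z => h z • ind {z}
  rw [sum_smul_ind_singleton] at hsum
  have hoff : ∀ z ∈ Finset.univ.erase x, 0 ≤ h z * Q (ind {z}) x := fun z hz =>
    mul_nonneg (hh z) (hQ.2.2.2 x z (Finset.ne_of_mem_erase hz).symm)
  calc h x * Q (ind {x}) x ≤ ∑ z, h z * Q (ind {z}) x := by
        rw [← Finset.add_sum_erase _ _ (Finset.mem_univ x)]
        exact le_add_of_nonneg_right (Finset.sum_nonneg hoff)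
    _ = (∑ z, Q (h z • ind {z})) x := by simp [Finset.sum_apply, hQ.2.2.1 _ (hh _)]
    _ ≤ Q h x := hsum x

lemma apply_nonpos_of_forall_le (hQ : IsLTRO Q) {f : X → ℝ} {x : X} (hx : ∀ w, f w ≤ f x) :
    Q f x ≤ 0 := by
  have hadd := hQ.2.1 f (fun w => f x - f w) x
  rw [show f + (fun w => f x - f w) = fun _ => f x by ext; simp, hQ.1] at hadd
  have hgap := hQ.mul_apply_ind_self_le (fun w => sub_nonneg.2 (hx w)) x
  simp only [sub_self, zero_mul] at hgap
  simp only [Pi.add_apply, Pi.zero_apply] at hadd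
  linarith

lemma conjOp_apply_le_sum (hQ : IsLTRO Q) {h : X → ℝ} (hh : 0 ≤ h) (w : X) :
    conjOp Q h w ≤ ∑ z, h z * conjOp Q (ind {z}) w := by
  have hsum := Finset.le_sum_of_subadditive (conjOp Q) (by simp [conjOp, hQ.map_zero])
    hQ.conjOp_add_le Finset.univ fun z => h z • ind {z}
  rw [sum_smul_ind_singleton] at hsum
  simpa [Finset.sum_apply, hQ.conjOp_smul (hh _)] using hsum w

lemma mul_conjOp_ind_add_le (hQ : IsLTRO Q) {h : X → ℝ} (hh : 0 ≤ h) {z w : X} (hzw : z ≠ w) :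
    h z * conjOp Q (ind {z}) w + h w * Q (ind {w}) w ≤ conjOp Q h w := by
  set r := h - h z • ind {z} with hr
  have hr0 : 0 ≤ r := by
    intro v
    rcases eq_or_ne v z with rfl | hvz
    · simp [hr]
    · simpa [hr, ind_singleton_of_ne hvz] using hh v
  have hrw : r w = h w := by simp [hr, ind_singleton_of_ne hzw.symm]
  have hsplit := hQ.conjOp_add_map_le (h z • ind {z}) r w
  rw [add_sub_cancel, hQ.conjOp_smul (hh z)] at hsplit
  have hlow := hQ.mul_apply_ind_self_le hr0 w
  rw [hrw] at hlow
  simp only [Pi.add_apply, Pi.smul_apply, smul_eq_mul] at hsplit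
  linarith

end IsLTRO

section ExpComparison

open Set Real

variable {φ φ' : ℝ → ℝ} {c : ℝ}

lemma hasDerivWithinAt_exp_mul_mul (hφ : ∀ s, 0 ≤ s → HasDerivWithinAt φ (φ' s) (Ici 0) s)
    {s : ℝ} (hs : 0 ≤ s) :
    HasDerivWithinAt (fun s => exp (c * s) * φ s) (exp (c * s) * (c * φ s + φ' s)) (Ici 0) s := by
  have hexp : HasDerivWithinAt (fun s => exp (c * s)) (exp (c * s) * c) (Ici 0) s :=
    ((hasDerivAt_id s).const_mul c).exp.hasDerivWithinAt.congr_deriv (by simp)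
  exact (hexp.mul (hφ s hs)).congr_deriv (by ring)

lemma le_exp_mul_mul_of_hasDerivWithinAt
    (hφ : ∀ s, 0 ≤ s → HasDerivWithinAt φ (φ' s) (Ici 0) s)
    (hbound : ∀ s, 0 < s → -(c * φ s) ≤ φ' s) {s : ℝ} (hs : 0 ≤ s) :
    φ 0 ≤ exp (c * s) * φ s := by
  have hmono : MonotoneOn (fun s => exp (c * s) * φ s) (Ici 0) := by
    refine monotoneOn_of_hasDerivWithinAt_nonneg (convex_Ici 0)
      (f' := fun s => exp (c * s) * (c * φ s + φ' s))
      (fun s hs => (hasDerivWithinAt_exp_mul_mul hφ hs).continuousWithinAt) ?_ ?_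
    · intro s hs
      rw [interior_Ici] at hs ⊢
      exact (hasDerivWithinAt_exp_mul_mul hφ hs.le).mono Ioi_subset_Ici_self
    · intro s hs
      rw [interior_Ici] at hs
      exact mul_nonneg (exp_pos _).le (by linarith [hbound s hs])
  simpa using hmono self_mem_Ici (mem_Ici.2 hs) hs

lemma lt_exp_mul_mul_of_hasDerivWithinAt
    (hφ : ∀ s, 0 ≤ s → HasDerivWithinAt φ (φ' s) (Ici 0) s)
    (hbound : ∀ s, 0 < s → -(c * φ s) < φ' s) {s : ℝ} (hs : 0 < s) :
    φ 0 < exp (c * s) * φ s := by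
  have hmono : StrictMonoOn (fun s => exp (c * s) * φ s) (Ici 0) := by
    refine strictMonoOn_of_hasDerivWithinAt_pos (convex_Ici 0)
      (f' := fun s => exp (c * s) * (c * φ s + φ' s))
      (fun s hs => (hasDerivWithinAt_exp_mul_mul hφ hs).continuousWithinAt) ?_ ?_
    · intro s hs
      rw [interior_Ici] at hs ⊢
      exact (hasDerivWithinAt_exp_mul_mul hφ hs.le).mono Ioi_subset_Ici_self
    · intro s hs
      rw [interior_Ici] at hs
      exact mul_pos (exp_pos _) (by linarith [hbound s hs])
  simpa using hmono self_mem_Ici (mem_Ici.2 hs.le) hs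

end ExpComparison

section Trajectory

open Set

variable {X : Type*} [Fintype X] [Nonempty X] {Q : (X → ℝ) → (X → ℝ)} {u : ℝ → X → ℝ}

lemma le_maxf (f : X → ℝ) (w : X) : f w ≤ maxf f :=
  Finset.le_sup' f (Finset.mem_univ w)

lemma eventually_apply_lt_maxf_add (hQ : IsLTRO Q)
    (hu : ∀ s, 0 ≤ s → HasDerivWithinAt u (Q (u s)) (Ici 0) s) {τ : ℝ} (hτ : 0 ≤ τ) {r : ℝ}
    (hr : 0 < r) (w : X) : ∀ᶠ z in 𝓝[>] τ, u z w < maxf (u τ) + r * (z - τ) := by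
  have hw : HasDerivWithinAt (fun s => u s w) (Q (u τ) w) (Ici τ) τ :=
    (hasDerivWithinAt_pi.1 (hu τ hτ) w).mono (Ici_subset_Ici.2 hτ)
  have hgrowth : ∀ᶠ z in 𝓝[>] τ, 0 < r * (z - τ) :=
    eventually_nhdsWithin_of_forall fun z hz => mul_pos hr (sub_pos.2 hz)
  rcases (le_maxf (u τ) w).lt_or_eq with hlt | heq
  · have hcont := (hw.continuousWithinAt.mono Ioi_subset_Ici_self).eventually_lt_const hlt
    filter_upwards [hcont, hgrowth] with z h1 h2
    linarith
  · have hderiv : Q (u τ) w < r :=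
      (hQ.apply_nonpos_of_forall_le fun v => heq ▸ le_maxf (u τ) v).trans_lt hr
    filter_upwards [hw.Ioi_of_Ici.limsup_slope_le' (lt_irrefl τ) hderiv, self_mem_nhdsWithin]
      with z hslope hz
    rw [slope_def_field, div_lt_iff₀ (sub_pos.2 hz)] at hslope
    linarith

lemma maxf_le_maxf_of_hasDerivWithinAt (hQ : IsLTRO Q)
    (hu : ∀ s, 0 ≤ s → HasDerivWithinAt u (Q (u s)) (Ici 0) s) {s : ℝ} (hs : 0 ≤ s) :
    maxf (u s) ≤ maxf (u 0) := by
  have hcont : ContinuousOn (fun s => maxf (u s)) (Icc 0 s) :=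
    ContinuousOn.finset_sup'_apply Finset.univ_nonempty fun w _ τ hτ =>
      ((hasDerivWithinAt_pi.1 (hu τ hτ.1) w).continuousWithinAt).mono fun _ h => h.1
  refine image_le_of_liminf_slope_right_le_deriv_boundary hcont le_rfl continuousOn_const
    (fun τ _ => hasDerivWithinAt_const τ _ (maxf (u 0))) (fun τ hτ r hr => ?_) ⟨hs, le_rfl⟩
  have hall : ∀ᶠ z in 𝓝[>] τ, ∀ w, u z w < maxf (u τ) + r * (z - τ) :=
    Filter.eventually_all.2 (eventually_apply_lt_maxf_add hQ hu hτ.1 hr)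
  refine Filter.Eventually.frequently ?_
  filter_upwards [hall, self_mem_nhdsWithin] with z hz hzτ
  have hmax : maxf (u z) < maxf (u τ) + r * (z - τ) := by
    simpa [maxf, Finset.sup'_lt_iff] using hz
  rw [slope_def_field, div_lt_iff₀ (sub_pos.2 hzτ)]
  linarith

end Trajectory

namespace IsSol

open Set

variable {X : Type*} [Fintype X] {Q : (X → ℝ) → (X → ℝ)} {T : ℝ → (X → ℝ) → (X → ℝ)}

lemma hasDerivWithinAt_conjOp (hT : IsSol Q T) (f : X → ℝ) {s : ℝ} (hs : 0 ≤ s) :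
    HasDerivWithinAt (fun s => conjOp (T s) f) (conjOp Q (conjOp (T s) f)) (Ici 0) s :=
  (hT.2 (-f) s hs).neg.congr_deriv (by simp [conjOp])

lemma conjOp_nonneg [Nonempty X] (hQ : IsLTRO Q) (hT : IsSol Q T) {f : X → ℝ} (hf : 0 ≤ f)
    {s : ℝ} (hs : 0 ≤ s) : 0 ≤ conjOp (T s) f := by
  intro w
  have hmax := maxf_le_maxf_of_hasDerivWithinAt hQ (fun s hs => hT.2 (-f) s hs) hs
  have hmax0 : maxf (T 0 (-f)) ≤ 0 := by
    rw [hT.1]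
    exact Finset.sup'_le _ _ fun v _ => neg_nonpos.2 (hf v)
  simpa [conjOp] using (le_maxf _ w).trans (hmax.trans hmax0)

end IsSol

section UpperReach

variable {X : Type*} [Fintype X] {Q : (X → ℝ) → (X → ℝ)}

lemma upperReach_refl (Q : (X → ℝ) → (X → ℝ)) (x : X) : upperReach Q x x :=
  ⟨0, fun _ => x, rfl, rfl, fun _ hk => absurd hk (Nat.not_lt_zero _)⟩

lemma upperReach_cons {x z w : X} (h : upperReach Q z x) (hzw : z ≠ w)
    (hpos : 0 < conjOp Q (ind {z}) w) : upperReach Q w x := by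
  obtain ⟨n, p, rfl, hpn, hp⟩ := h
  refine ⟨n + 1, fun k => Nat.casesOn k w p, rfl, hpn, ?_⟩
  rintro (_ | k) hk
  · exact ⟨hzw, hpos⟩
  · exact hp k (by omega)

lemma conjOp_ind_nonpos_of_upperReach {x z w : X} (hz : upperReach Q z x)
    (hw : ¬ upperReach Q w x) : conjOp Q (ind {z}) w ≤ 0 :=
  not_lt.1 fun hpos => hw (upperReach_cons hz (fun h => hw (h ▸ hz)) hpos)

lemma upperReach_induction {x : X} {P : X → Prop} (hx : P x)
    (hstep : ∀ z w, P z → z ≠ w → 0 < conjOp Q (ind {z}) w → P w) {y : X}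
    (hy : upperReach Q y x) : P y := by
  obtain ⟨n, p, rfl, hpn, hp⟩ := hy
  induction n generalizing p with
  | zero => exact hpn ▸ hx
  | succ n ih =>
    have h1 : P (p 1) := ih (fun k => p (k + 1)) hpn fun k hk => hp (k + 1) (by omega)
    exact hstep _ _ h1 (hp 0 (by omega)).1 (hp 0 (by omega)).2

end UpperReach

section ConjugateTrajectory

open Set Real

variable {X : Type*} [Fintype X] {Q : (X → ℝ) → (X → ℝ)} {v : ℝ → X → ℝ}

lemma apply_eq_zero_of_conjOp_ind_nonpos (hQ : IsLTRO Q)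
    (hv : ∀ s, 0 ≤ s → HasDerivWithinAt v (conjOp Q (v s)) (Ici 0) s)
    (hv0 : ∀ s, 0 ≤ s → 0 ≤ v s) {R : Set X}
    (hR : ∀ z ∈ R, ∀ w ∉ R, conjOp Q (ind {z}) w ≤ 0) {c : ℝ}
    (hc : ∀ z w, conjOp Q (ind {z}) w ≤ c) (hR0 : ∀ w ∉ R, v 0 w = 0) {s : ℝ} (hs : 0 ≤ s)
    {w : X} (hw : w ∉ R) : v s w = 0 := by
  classical
  set S := Finset.univ.filter (· ∉ R)
  set Φ := fun s => ∑ w ∈ S, v s w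
  have hrate : ∀ s, 0 ≤ s → ∀ w ∉ R, conjOp Q (v s) w ≤ c * Φ s := by
    intro s hs w hw
    calc conjOp Q (v s) w ≤ ∑ z, v s z * conjOp Q (ind {z}) w :=
          hQ.conjOp_apply_le_sum (hv0 s hs) w
      _ ≤ ∑ z, if z ∉ R then v s z * c else 0 := by
          refine Finset.sum_le_sum fun z _ => ?_
          by_cases hz : z ∈ R
          · simpa [hz] using mul_nonpos_of_nonneg_of_nonpos (hv0 s hs z) (hR z hz w hw)
          · simpa [hz] using mul_le_mul_of_nonneg_left (hc z w) (hv0 s hs z)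
      _ = c * Φ s := by
          rw [← Finset.sum_filter, Finset.mul_sum]
          exact Finset.sum_congr rfl fun _ _ => mul_comm _ _
  have hgrowth : ∀ s, 0 ≤ s → ∑ w ∈ S, conjOp Q (v s) w ≤ S.card * (c * Φ s) := fun s hs => by
    simpa using Finset.sum_le_sum fun w hw => hrate s hs w (Finset.mem_filter.1 hw).2
  have hΦ : ∀ s, 0 ≤ s → HasDerivWithinAt Φ (∑ w ∈ S, conjOp Q (v s) w) (Ici 0) s :=
    fun s hs => HasDerivWithinAt.fun_sum fun w _ => hasDerivWithinAt_pi.1 (hv s hs) w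
  have hΦ0 : Φ 0 = 0 := Finset.sum_eq_zero fun w hw => hR0 w (Finset.mem_filter.1 hw).2
  have hcmp := le_exp_mul_mul_of_hasDerivWithinAt (φ := fun s => -Φ s) (c := -(S.card * c))
    (fun s hs => (hΦ s hs).neg) (fun s hs => by linarith [hgrowth s hs.le]) hs
  have hΦs : Φ s ≤ 0 := by
    simp only [hΦ0, neg_zero] at hcmp
    linarith [(mul_nonneg_iff_of_pos_left (exp_pos _)).1 hcmp]
  have hle : v s w ≤ Φ s :=
    Finset.single_le_sum (fun w _ => hv0 s hs w) (Finset.mem_filter.2 ⟨Finset.mem_univ w, hw⟩)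
  exact le_antisymm (hle.trans hΦs) (hv0 s hs w)

lemma pos_of_upperReach (hQ : IsLTRO Q)
    (hv : ∀ s, 0 ≤ s → HasDerivWithinAt v (conjOp Q (v s)) (Ici 0) s)
    (hv0 : ∀ s, 0 ≤ s → 0 ≤ v s) {c : ℝ} (hc : ∀ w, -c ≤ Q (ind {w}) w) {x y : X}
    (hx : 0 < v 0 x) (hxy : upperReach Q y x) {s : ℝ} (hs : 0 < s) : 0 < v s y := by
  have hcoord : ∀ w s, 0 ≤ s → HasDerivWithinAt (fun s => v s w) (conjOp Q (v s) w) (Ici 0) s :=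
    fun w s hs => hasDerivWithinAt_pi.1 (hv s hs) w
  have hdiag : ∀ s, 0 ≤ s → ∀ w, -(c * v s w) ≤ v s w * Q (ind {w}) w := fun s hs w => by
    linarith [mul_le_mul_of_nonneg_left (hc w) (hv0 s hs w)]
  refine upperReach_induction (P := fun w => ∀ s, 0 < s → 0 < v s w) ?_ ?_ hxy s hs
  · intro s hs
    have hcmp := le_exp_mul_mul_of_hasDerivWithinAt (hcoord x) (fun s hs =>
      (hdiag s hs.le x).trans ((hQ.mul_apply_ind_self_le (hv0 s hs.le) x).trans
        (hQ.le_conjOp _ x))) hs.le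
    exact (mul_pos_iff_of_pos_left (exp_pos _)).1 (hx.trans_le hcmp)
  · intro z w hz hzw hzw_pos s hs
    have hcmp := lt_exp_mul_mul_of_hasDerivWithinAt (c := c) (hcoord w) (fun s hs => by
      have hflow := hQ.mul_conjOp_ind_add_le (hv0 s hs.le) hzw
      linarith [mul_pos (hz s hs) hzw_pos, hdiag s hs.le w]) hs
    exact (mul_pos_iff_of_pos_left (exp_pos _)).1 ((hv0 0 le_rfl w).trans_lt hcmp)

end ConjugateTrajectory

/-- For any `t > 0` and states `x, y`: `T̄_t 𝟙ₓ (y) > 0` iff `x` is upper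
reachable from `y`. -/
theorem stmt3 {X : Type*} [Fintype X] [Nonempty X]
    (Q : (X → ℝ) → (X → ℝ)) (hQ : IsLTRO Q)
    (T : ℝ → (X → ℝ) → (X → ℝ)) (hT : IsSol Q T)
    (t : ℝ) (ht : 0 < t) (x y : X) :
    0 < conjOp (T t) (ind {x}) y ↔ upperReach Q y x := by
  set g := fun s => conjOp (T s) (ind ({x} : Set X))
  have hg : ∀ s, 0 ≤ s → HasDerivWithinAt g (conjOp Q (g s)) (Set.Ici 0) s :=
    fun s hs => hT.hasDerivWithinAt_conjOp _ hs
  have hg0 : ∀ s, 0 ≤ s → 0 ≤ g s := fun s hs => hT.conjOp_nonneg hQ (ind_singleton_nonneg x) hs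
  have hgx : g 0 = ind {x} := by simp [g, conjOp, hT.1]
  obtain ⟨c₁, hc₁⟩ := Finite.exists_le fun p : X × X => conjOp Q (ind {p.1}) p.2
  obtain ⟨c₂, hc₂⟩ := Finite.exists_ge fun w => Q (ind {w}) w
  constructor
  · intro hpos
    by_contra hy
    refine hpos.ne' (apply_eq_zero_of_conjOp_ind_nonpos hQ hg hg0 (R := {w | upperReach Q w x})
      (fun z hz w hw => conjOp_ind_nonpos_of_upperReach hz hw) (fun z w => hc₁ (z, w))
      (fun w hw => ?_) ht.le hy)
    rw [hgx]
    exact ind_singleton_of_ne fun h => hw (h ▸ upperReach_refl Q x)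
  · intro hy
    exact pos_of_upperReach hQ hg hg0 (c := -c₂) (fun w => by simpa using hc₂ w)
      (by simp [hgx]) hy ht
end

section
/- Let Q be a lower transition rate operator on a finite nonempty set 𝒳, and let (T_t)_{t≥0} be the associated family of operators determined by the differential equation d/dt T_t f = Q(T_t f) with T_0 f = f. Then for any t > 0, any x ∈ 𝒳 and any A ⊆ 𝒳: T_t 𝟙_A(x) > 0 if and only if A is lower reachable from x, i.e. if and only if x ∈ A_n, where A_0 := A, A_{k+1} := A_k ∪ {y ∈ 𝒳 \ A_k : Q(𝟙_{A_k})(y) > 0}, and n is the first index with A_n = A_{n+1}. -/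
open Filter Topology

/-!
A maximum principle drives everything: `Q f (x) ≤ 0` wherever `f` is maximal, so the solution
`T_t f` cannot rise above a bound that holds at time `0` (perturb the bound by `ε (1 + t)` and
look at the first crossing time). In particular `0 ≤ T_t 𝟙_A ≤ 1`.

If `A` is lower reachable from `x`, positivity spreads along `A = A₀ ⊆ A₁ ⊆ ⋯`: if `T_s 𝟙_A ≥ δ > 0`
on `A_k` for `s ∈ [t/2, t]` and `y ∈ A_{k+1} \ A_k`, then comparing `T_s 𝟙_A` from below with
`δ 𝟙_{A_k} + T_s 𝟙_A (y) 𝟙_{y}` shows that `e^{cs} T_s 𝟙_A (y)` grows at a rate proportional to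
`δ Q 𝟙_{A_k} (y) > 0`.

Conversely the construction stabilises at some `B ⊇ A` with `Q 𝟙_B ≤ 0` off `B`. At a maximiser
`w ∉ B` of `T_s 𝟙_A` off `B`, comparing from above with `T_s 𝟙_A (w) + (1 - T_s 𝟙_A (w)) 𝟙_B`
gives a nonpositive derivative, so the maximum principle keeps `T_t 𝟙_A ≤ 0` off `B`.
-/

set_option linter.unusedSectionVars false

open Set

lemma ind_apply {X : Type*} (A : Set X) (z : X) [Decidable (z ∈ A)] :
    ind A z = if z ∈ A then 1 else 0 := by
  simp [ind, Set.indicator_apply]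

lemma ind_nonneg {X : Type*} (A : Set X) (z : X) : 0 ≤ ind A z :=
  Set.indicator_nonneg (fun _ _ => zero_le_one) z

lemma ind_le_one {X : Type*} (A : Set X) (z : X) : ind A z ≤ 1 :=
  Set.indicator_le_self' (fun _ _ => zero_le_one) z

lemma sum_smul_ind_singleton_s4 {X : Type*} [Fintype X] (h : X → ℝ) :
    ∑ y, h y • ind {y} = h := by
  classical
  funext z
  simp [ind_apply, Finset.sum_apply]

namespace IsLTRO

variable {X : Type*} [Fintype X] {Q : (X → ℝ) → (X → ℝ)} (hQ : IsLTRO Q)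
include hQ

lemma sum_le_map_sum {ι : Type*} (s : Finset ι) (F : ι → X → ℝ) :
    ∑ i ∈ s, Q (F i) ≤ Q (∑ i ∈ s, F i) := by
  classical
  induction s using Finset.induction_on with
  | empty => exact (hQ.1 0).ge
  | insert i s hi ih =>
    rw [Finset.sum_insert hi, Finset.sum_insert hi]
    exact (add_le_add_right ih _).trans (hQ.2.1 _ _)

lemma apply_nonneg_of_eq_zero {h : X → ℝ} {x : X} (hh : 0 ≤ h) (hx : h x = 0) :
    0 ≤ Q h x := by
  have hterm : ∀ y, 0 ≤ Q (h y • ind {y}) x := by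
    intro y
    rw [hQ.2.2.1 (h y) (hh y), Pi.smul_apply, smul_eq_mul]
    rcases eq_or_ne x y with rfl | hxy
    · simp [hx]
    · exact mul_nonneg (hh y) (hQ.2.2.2 x y hxy)
  calc 0 ≤ ∑ y, Q (h y • ind {y}) x := Finset.sum_nonneg fun y _ => hterm y
    _ ≤ Q h x := by
      simpa [sum_smul_ind_singleton_s4] using hQ.sum_le_map_sum Finset.univ (fun y => h y • ind {y}) x

lemma apply_ind_nonneg {S : Set X} {y : X} (hy : y ∉ S) : 0 ≤ Q (ind S) y :=
  hQ.apply_nonneg_of_eq_zero (ind_nonneg S) (Set.indicator_of_notMem hy _)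

lemma apply_le_apply_of_le_of_eq {f g : X → ℝ} {x : X} (hle : f ≤ g) (hx : f x = g x) :
    Q f x ≤ Q g x := by
  have hsum : Q f x + Q (g - f) x ≤ Q g x := by
    simpa using hQ.2.1 f (g - f) x
  have hdiff : 0 ≤ Q (g - f) x :=
    hQ.apply_nonneg_of_eq_zero (sub_nonneg.2 hle) (by simp [hx])
  linarith

lemma apply_nonpos_of_isMax {f : X → ℝ} {x : X} (hmax : ∀ z, f z ≤ f x) : Q f x ≤ 0 := by
  simpa [hQ.1] using hQ.apply_le_apply_of_le_of_eq (g := fun _ => f x) hmax rfl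

lemma apply_nonneg_of_isMin {f : X → ℝ} {x : X} (hmin : ∀ z, f x ≤ f z) : 0 ≤ Q f x := by
  simpa [hQ.1] using hQ.apply_le_apply_of_le_of_eq (f := fun _ => f x) hmin rfl

lemma map_const_add (μ : ℝ) (f : X → ℝ) : Q ((fun _ => μ) + f) = Q f := by
  apply le_antisymm
  · have hcancel : (fun _ => μ) + f + (fun _ => -μ) = f := by funext z; simp
    have h := hQ.2.1 ((fun _ => μ) + f) (fun _ => -μ)
    rwa [hcancel, hQ.1, add_zero] at h
  · simpa [hQ.1] using hQ.2.1 (fun _ => μ) f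

lemma apply_ind_singleton_self_nonpos (y : X) : Q (ind {y}) y ≤ 0 :=
  hQ.apply_nonpos_of_isMax fun z => by
    simpa [ind] using ind_le_one {y} z

/-- Compare `f` from below with `δ 𝟙_S + f(y) 𝟙_{y}`, which touches it at `y`. -/
lemma mul_add_mul_le_apply {S : Set X} {y : X} (hy : y ∉ S) {δ : ℝ} (hδ : 0 ≤ δ)
    {f : X → ℝ} (hf : 0 ≤ f) (hfS : ∀ z ∈ S, δ ≤ f z) :
    δ * Q (ind S) y + f y * Q (ind {y}) y ≤ Q f y := by
  classical
  have hle : δ • ind S + f y • ind {y} ≤ f := by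
    intro z
    simp only [Pi.add_apply, Pi.smul_apply, smul_eq_mul, ind_apply]
    by_cases hzS : z ∈ S
    · have hzy : z ≠ y := fun h => hy (h ▸ hzS)
      simp [hzS, hzy, hfS z hzS]
    · by_cases hzy : z = y
      · simp [hzy, hy]
      · simpa [hzS, hzy] using hf z
  have heq : (δ • ind S + f y • ind {y}) y = f y := by
    simp [ind_apply, hy]
  calc δ * Q (ind S) y + f y * Q (ind {y}) y
      = Q (δ • ind S) y + Q (f y • ind {y}) y := by
        rw [hQ.2.2.1 δ hδ, hQ.2.2.1 (f y) (hf y)]; rfl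
    _ ≤ Q (δ • ind S + f y • ind {y}) y := hQ.2.1 _ _ y
    _ ≤ Q f y := hQ.apply_le_apply_of_le_of_eq hle heq

/-- Compare `g` from above with `g(w) + (1 - g(w)) 𝟙_B`, which touches it at `w`. -/
lemma apply_nonpos_of_isMaxOn_compl {B : Set X} {w : X} (hw : w ∉ B)
    (hB : Q (ind B) w ≤ 0) {g : X → ℝ} (hg : g ≤ 1) (hmax : ∀ z ∉ B, g z ≤ g w) :
    Q g w ≤ 0 := by
  classical
  set φ : X → ℝ := (fun _ => g w) + (1 - g w) • ind B with hφ
  have hle : g ≤ φ := by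
    intro z
    simp only [hφ, Pi.add_apply, Pi.smul_apply, smul_eq_mul, ind_apply]
    by_cases hzB : z ∈ B
    · simpa [hzB] using hg z
    · simpa [hzB] using hmax z hzB
  have heq : g w = φ w := by
    simp [hφ, ind_apply, hw]
  have hgw : 0 ≤ 1 - g w := sub_nonneg.2 (hg w)
  calc Q g w ≤ Q φ w :=
        hQ.apply_le_apply_of_le_of_eq hle heq
    _ = (1 - g w) * Q (ind B) w := by rw [hQ.map_const_add, hQ.2.2.1 _ hgw]; rfl
    _ ≤ 0 := mul_nonpos_of_nonneg_of_nonpos hgw hB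

end IsLTRO

lemma HasDerivWithinAt.nonneg_of_isMaxOn_Icc {φ : ℝ → ℝ} {φ' a b : ℝ} (hab : a < b)
    (hφ : HasDerivWithinAt φ φ' (Icc a b) b) (hmax : IsMaxOn φ (Icc a b) b) : 0 ≤ φ' := by
  have hcone : a - b ∈ posTangentConeAt (Icc a b) b :=
    sub_mem_posTangentConeAt_of_segment_subset (by rw [segment_symm, segment_eq_Icc hab.le])
  have h := hmax.localize.hasFDerivWithinAt_nonpos hφ.hasFDerivWithinAt hcone
  rw [ContinuousLinearMap.toSpanSingleton_apply, smul_eq_mul] at h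
  exact nonneg_of_mul_nonpos_right h (sub_neg.2 hab)

lemma mul_sub_le_image_sub_of_le_deriv_right {φ φ' : ℝ → ℝ} {a b r : ℝ} (hab : a ≤ b)
    (hcont : ContinuousOn φ (Icc a b))
    (hφ : ∀ s ∈ Ico a b, HasDerivWithinAt φ (φ' s) (Ici s) s)
    (hr : ∀ s ∈ Ico a b, r ≤ φ' s) :
    r * (b - a) ≤ φ b - φ a := by
  have key := image_le_of_deriv_right_le_deriv_boundary (f := fun s => -φ s)
    (B := fun s => -φ a - r * (s - a)) (B' := fun _ => -r) hcont.neg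
    (fun s hs => (hφ s hs).neg) (by simp) (by fun_prop)
    (fun s _ => ((((hasDerivAt_id s).sub_const a).const_mul r).const_sub (-φ a)
      ).hasDerivWithinAt.congr_deriv (by ring))
    (fun s hs => neg_le_neg (hr s hs)) (right_mem_Icc.2 hab)
  linarith

lemma lt_add_mul_of_hasDerivWithinAt_nonpos_at_max {ι : Type*} {C : Set ι} (hC : C.Finite)
    {g D : ℝ → ι → ℝ} {M : ℝ}
    (hg : ∀ t, 0 ≤ t → ∀ x ∈ C, HasDerivWithinAt (fun s => g s x) (D t x) (Ici 0) t)
    (hD : ∀ t, 0 ≤ t → ∀ x ∈ C, (∀ z ∈ C, g t z ≤ g t x) → D t x ≤ 0)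
    (h0 : ∀ x ∈ C, g 0 x ≤ M) {ε : ℝ} (hε : 0 < ε) {t : ℝ} (ht : 0 ≤ t) {x : ι}
    (hx : x ∈ C) : g t x < M + ε * (1 + t) := by
  by_contra! hbad
  set B : ℝ → ℝ := fun s => M + ε * (1 + s)
  -- the times in `[0, t]` at which some `g · z` has reached the barrier `B`; `τ` is the first one
  set S : Set ℝ := ⋃ z ∈ C, Icc 0 t ∩ (fun s => g s z - B s) ⁻¹' Ici 0
  have hSclosed : IsClosed S := hC.isClosed_biUnion fun z hz =>
    ContinuousOn.preimage_isClosed_of_isClosed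
      (ContinuousOn.sub (fun s hs => (hg s hs.1 z hz).continuousWithinAt.mono Icc_subset_Ici_self)
        (by fun_prop)) isClosed_Icc isClosed_Ici
  have htS : t ∈ S := mem_biUnion hx ⟨⟨ht, le_rfl⟩, sub_nonneg.2 hbad⟩
  have hSbdd : BddBelow S := ⟨0, fun s hs => by
    obtain ⟨z, -, hs⟩ := mem_iUnion₂.1 hs
    exact hs.1.1⟩
  set τ := sInf S
  obtain ⟨z₀, hz₀, ⟨hτ0, -⟩, hz₀τ⟩ := mem_iUnion₂.1 (hSclosed.csInf_mem ⟨t, htS⟩ hSbdd)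
  obtain ⟨w, hw, hwmax⟩ := exists_max_image C (g τ) hC ⟨z₀, hz₀⟩
  have hτpos : 0 < τ := by
    refine hτ0.lt_of_ne fun hτ => ?_
    have : B 0 ≤ g 0 z₀ := by simpa [← hτ] using hz₀τ
    linarith [h0 z₀ hz₀]
  have hbelow : ∀ s ∈ Ico 0 τ, g s w < B s := fun s hs => by
    by_contra! hsw
    exact (csInf_le hSbdd (mem_biUnion hw ⟨⟨hs.1, hs.2.le.trans (csInf_le hSbdd htS)⟩,
      sub_nonneg.2 hsw⟩)).not_gt hs.2
  have hmax : IsMaxOn (fun s => g s w - B s) (Icc 0 τ) τ := fun s hs => by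
    rcases hs.2.eq_or_lt with rfl | hsτ
    · exact le_refl (g τ w - B τ)
    · have : B τ ≤ g τ w := (sub_nonneg.1 hz₀τ).trans (hwmax z₀ hz₀)
      change g s w - B s ≤ g τ w - B τ
      linarith [hbelow s ⟨hs.1, hsτ⟩]
  have hderiv : HasDerivWithinAt (fun s => g s w - B s) (D τ w - ε) (Icc 0 τ) τ :=
    ((hg τ hτ0 w hw).sub ((((hasDerivAt_id τ).const_add 1).const_mul ε).const_add M
      |>.hasDerivWithinAt.congr_deriv (by ring))).mono Icc_subset_Ici_self
  -- `g · w - B` is maximal on `[0, τ]` at `τ`, yet its derivative there is `D τ w - ε < 0`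
  linarith [hderiv.nonneg_of_isMaxOn_Icc hτpos hmax, hD τ hτ0 w hw hwmax]

lemma le_of_hasDerivWithinAt_nonpos_at_max {ι : Type*} {C : Set ι} (hC : C.Finite)
    {g D : ℝ → ι → ℝ} {M : ℝ}
    (hg : ∀ t, 0 ≤ t → ∀ x ∈ C, HasDerivWithinAt (fun s => g s x) (D t x) (Ici 0) t)
    (hD : ∀ t, 0 ≤ t → ∀ x ∈ C, (∀ z ∈ C, g t z ≤ g t x) → D t x ≤ 0)
    (h0 : ∀ x ∈ C, g 0 x ≤ M) {t : ℝ} (ht : 0 ≤ t) {x : ι} (hx : x ∈ C) : g t x ≤ M := by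
  refine le_of_forall_pos_lt_add fun ε hε => ?_
  have h1t : 0 < 1 + t := by linarith
  simpa [div_mul_cancel₀ _ h1t.ne'] using
    lt_add_mul_of_hasDerivWithinAt_nonpos_at_max hC hg hD h0 (div_pos hε h1t) ht hx

lemma Set.Finite.exists_pos_le_of_continuousOn {ι : Type*} {S : Set ι} (hS : S.Finite)
    {F : ℝ → ι → ℝ} {a b : ℝ} (hab : a ≤ b) (hF : ∀ z ∈ S, ContinuousOn (F · z) (Icc a b))
    (hpos : ∀ z ∈ S, ∀ s ∈ Icc a b, 0 < F s z) :
    ∃ δ > 0, ∀ z ∈ S, ∀ s ∈ Icc a b, δ ≤ F s z := by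
  have hev : ∀ z ∈ S, ∀ᶠ δ in 𝓝[>] (0 : ℝ), ∀ s ∈ Icc a b, δ ≤ F s z := fun z hz => by
    obtain ⟨s₀, hs₀, hmin⟩ := isCompact_Icc.exists_isMinOn (nonempty_Icc.2 hab) (hF z hz)
    filter_upwards [Ioc_mem_nhdsGT (hpos z hz s₀ hs₀)] with δ hδ s hs
    exact hδ.2.trans (hmin hs)
  obtain ⟨δ, hδ, hδpos⟩ := ((hS.eventually_all.2 hev).and self_mem_nhdsWithin).exists
  exact ⟨δ, hδpos, hδ⟩

namespace IsSol

variable {X : Type*} [Fintype X] {Q : (X → ℝ) → (X → ℝ)} {T : ℝ → (X → ℝ) → (X → ℝ)}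
  (hT : IsSol Q T)
include hT

lemma hasDerivWithinAt_apply (f : X → ℝ) (x : X) {t : ℝ} (ht : 0 ≤ t) :
    HasDerivWithinAt (fun s => T s f x) (Q (T t f) x) (Ici 0) t :=
  hasDerivWithinAt_pi.1 (hT.2 f t ht) x

lemma continuousOn_apply (f : X → ℝ) (x : X) : ContinuousOn (fun s => T s f x) (Ici 0) :=
  fun _ ht => (hT.hasDerivWithinAt_apply f x ht).continuousWithinAt

variable (hQ : IsLTRO Q)
include hQ

lemma apply_le {f : X → ℝ} {M : ℝ} (hf : ∀ z, f z ≤ M) {t : ℝ} (ht : 0 ≤ t) (x : X) :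
    T t f x ≤ M :=
  le_of_hasDerivWithinAt_nonpos_at_max finite_univ
    (fun _ hs x _ => hT.hasDerivWithinAt_apply f x hs)
    (fun _ _ x _ hmax => hQ.apply_nonpos_of_isMax fun z => hmax z (mem_univ z))
    (fun x _ => by rw [hT.1]; exact hf x) ht (mem_univ x)

lemma le_apply {f : X → ℝ} {M : ℝ} (hf : ∀ z, M ≤ f z) {t : ℝ} (ht : 0 ≤ t) (x : X) :
    M ≤ T t f x :=
  neg_le_neg_iff.1 <| le_of_hasDerivWithinAt_nonpos_at_max (g := fun s z => -T s f z)
    finite_univ (fun _ hs x _ => (hT.hasDerivWithinAt_apply f x hs).neg)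
    (fun _ _ x _ hmax => neg_nonpos.2 <| hQ.apply_nonneg_of_isMin fun z =>
      neg_le_neg_iff.1 (hmax z (mem_univ z)))
    (fun x _ => by simp only [hT.1, neg_le_neg_iff]; exact hf x) ht (mem_univ x)

/-- The weight `e^{cs}` compensates the exit rate `-Q 𝟙_{y} (y) ≤ c`, so `e^{cs} T_s f (y)` can
only grow, and it grows at rate at least `δ Q 𝟙_S (y) e^{ca}` while `T_s f ≥ δ` on `S`. -/
lemma exp_mul_apply_add_le {f : X → ℝ} (hf : 0 ≤ f) {S : Set X} {y : X} (hy : y ∉ S)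
    {c : ℝ} (hc : -Q (ind {y}) y ≤ c) {δ a b : ℝ} (hδ : 0 ≤ δ) (ha : 0 ≤ a) (hab : a ≤ b)
    (hS : ∀ z ∈ S, ∀ s ∈ Icc a b, δ ≤ T s f z) :
    Real.exp (c * a) * T a f y + δ * Q (ind S) y * Real.exp (c * a) * (b - a) ≤
      Real.exp (c * b) * T b f y := by
  have hc0 : 0 ≤ c := (neg_nonneg.2 (hQ.apply_ind_singleton_self_nonpos y)).trans hc
  have hq : 0 ≤ Q (ind S) y := hQ.apply_ind_nonneg hy
  have hderiv : ∀ s ∈ Ico a b, HasDerivWithinAt (fun s => Real.exp (c * s) * T s f y)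
      (Real.exp (c * s) * (c * T s f y + Q (T s f) y)) (Ici s) s := fun s hs => by
    have hs0 : 0 ≤ s := ha.trans hs.1
    have hexp : HasDerivAt (fun u => Real.exp (c * u)) (Real.exp (c * s) * c) s := by
      simpa using ((hasDerivAt_id s).const_mul c).exp
    exact (hexp.hasDerivWithinAt.mul ((hT.hasDerivWithinAt_apply f y hs0).mono
      (Ici_subset_Ici.2 hs0))).congr_deriv (by ring)
  have hrate : ∀ s ∈ Ico a b,
      δ * Q (ind S) y * Real.exp (c * a) ≤ Real.exp (c * s) * (c * T s f y + Q (T s f) y) :=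
    fun s hs => by
    have hs0 : 0 ≤ s := ha.trans hs.1
    have hTs : 0 ≤ T s f := fun z => hT.le_apply hQ hf hs0 z
    have hlow := hQ.mul_add_mul_le_apply hy hδ hTs fun z hz => hS z hz s ⟨hs.1, hs.2.le⟩
    have hexp : Real.exp (c * a) ≤ Real.exp (c * s) :=
      Real.exp_le_exp.2 (mul_le_mul_of_nonneg_left hs.1 hc0)
    calc δ * Q (ind S) y * Real.exp (c * a) ≤ δ * Q (ind S) y * Real.exp (c * s) :=
          mul_le_mul_of_nonneg_left hexp (mul_nonneg hδ hq)
      _ ≤ (c * T s f y + Q (T s f) y) * Real.exp (c * s) := by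
          gcongr
          linarith [mul_nonneg (neg_le_iff_add_nonneg.1 hc) (hTs y)]
      _ = _ := mul_comm _ _
  have hcont : ContinuousOn (fun s => Real.exp (c * s) * T s f y) (Icc a b) :=
    (by fun_prop : Continuous fun s => Real.exp (c * s)).continuousOn.mul
      ((hT.continuousOn_apply f y).mono fun s hs => ha.trans hs.1)
  linarith [mul_sub_le_image_sub_of_le_deriv_right hab hcont hderiv hrate]

lemma apply_pos_of_le {f : X → ℝ} (hf : 0 ≤ f) {y : X} {a b : ℝ} (ha : 0 ≤ a) (hab : a ≤ b)
    (hpos : 0 < T a f y) : 0 < T b f y := by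
  have h := hT.exp_mul_apply_add_le hQ hf (notMem_empty y) le_rfl le_rfl ha hab
    (fun z hz => absurd hz (notMem_empty z))
  rw [zero_mul, zero_mul, zero_mul, add_zero] at h
  exact pos_of_mul_pos_right ((mul_pos (Real.exp_pos _) hpos).trans_le h) (Real.exp_pos _).le

lemma apply_pos_of_lowerStep {f : X → ℝ} (hf : 0 ≤ f) {S : Set X} {y : X} (hy : y ∉ S)
    (hq : 0 < Q (ind S) y) {a b : ℝ} (ha : 0 ≤ a) (hab : a < b)
    (hS : ∀ z ∈ S, ∀ s ∈ Icc a b, 0 < T s f z) : 0 < T b f y := by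
  obtain ⟨δ, hδ, hδS⟩ := S.toFinite.exists_pos_le_of_continuousOn hab.le
    (fun z _ => (hT.continuousOn_apply f z).mono fun s hs => ha.trans hs.1) hS
  have h := hT.exp_mul_apply_add_le hQ hf hy le_rfl hδ.le ha hab.le hδS
  have hTa : 0 ≤ Real.exp (-Q (ind {y}) y * a) * T a f y :=
    mul_nonneg (Real.exp_pos _).le (hT.le_apply hQ hf ha y)
  have hgain : 0 < δ * Q (ind S) y * Real.exp (-Q (ind {y}) y * a) * (b - a) := by
    have := sub_pos.2 hab
    positivity
  exact pos_of_mul_pos_right (by linarith) (Real.exp_pos _).le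

lemma apply_ind_pos_of_mem_iterate_lowerStep {A : Set X} (k : ℕ) {y : X}
    (hy : y ∈ (lowerStep Q)^[k] A) {t : ℝ} (ht : 0 < t) : 0 < T t (ind A) y := by
  induction k generalizing y t with
  | zero =>
    have h0 : 0 < T 0 (ind A) y := by simp [hT.1, ind, Set.indicator_of_mem (show y ∈ A from hy)]
    exact hT.apply_pos_of_le hQ (ind_nonneg A) le_rfl ht.le h0
  | succ k ih =>
    rw [Function.iterate_succ_apply'] at hy
    rcases hy with hy | ⟨hy, hq⟩
    · exact ih hy ht
    · exact hT.apply_pos_of_lowerStep hQ (ind_nonneg A) hy hq (half_pos ht).le (half_lt_self ht)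
        fun z hz s hs => ih hz ((half_pos ht).trans_le hs.1)

lemma apply_ind_nonpos_of_lowerStep_eq_self {A B : Set X} (hB : lowerStep Q B = B)
    (hAB : A ⊆ B) {t : ℝ} (ht : 0 ≤ t) {x : X} (hx : x ∉ B) : T t (ind A) x ≤ 0 := by
  have hQB : ∀ w ∉ B, Q (ind B) w ≤ 0 := fun w hw => by
    by_contra! hpos
    exact hw (hB ▸ Or.inr ⟨hw, hpos⟩)
  exact le_of_hasDerivWithinAt_nonpos_at_max (C := Bᶜ) (toFinite _)
    (fun _ hs x _ => hT.hasDerivWithinAt_apply (ind A) x hs)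
    (fun _ hs w hw hmax => hQ.apply_nonpos_of_isMaxOn_compl hw (hQB w hw)
      (fun z => hT.apply_le hQ (ind_le_one A) hs z) hmax)
    (fun z hz => by simp [hT.1, ind, Set.indicator_of_notMem (fun h => hz (hAB h))]) ht hx

end IsSol

section lowerStep

variable {X : Type*} [Fintype X] (Q : (X → ℝ) → (X → ℝ))

lemma monotone_iterate_lowerStep (A : Set X) : Monotone fun n => (lowerStep Q)^[n] A :=
  monotone_nat_of_le_succ fun n => by
    rw [Function.iterate_succ_apply']
    exact subset_union_left

lemma exists_iterate_lowerStep_eq_succ (A : Set X) :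
    ∃ n, (lowerStep Q)^[n] A = (lowerStep Q)^[n + 1] A := by
  obtain ⟨n, hn⟩ := WellFoundedGT.monotone_chain_condition ⟨_, monotone_iterate_lowerStep Q A⟩
  exact ⟨n, hn (n + 1) n.le_succ⟩

end lowerStep

theorem stmt4_general {X : Type*} [Fintype X]
    (Q : (X → ℝ) → (X → ℝ)) (hQ : IsLTRO Q)
    (T : ℝ → (X → ℝ) → (X → ℝ)) (hT : IsSol Q T)
    (t : ℝ) (ht : 0 < t) (x : X) (A : Set X) :
    0 < T t (ind A) x ↔ lowerReach Q x A := by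
  refine ⟨fun hpos => ?_, fun ⟨n, _, hx⟩ => hT.apply_ind_pos_of_mem_iterate_lowerStep hQ n hx ht⟩
  obtain ⟨n, hn⟩ := exists_iterate_lowerStep_eq_succ Q A
  by_contra hx
  have hfix : lowerStep Q ((lowerStep Q)^[n] A) = (lowerStep Q)^[n] A :=
    (Function.iterate_succ_apply' _ n A).symm.trans hn.symm
  exact (hT.apply_ind_nonpos_of_lowerStep_eq_self hQ hfix
    (monotone_iterate_lowerStep Q A n.zero_le) ht.le fun hxn => hx ⟨n, hn, hxn⟩).not_gt hpos

/-- For any `t > 0`, state `x` and set `A`: `T_t 𝟙_A (x) > 0` iff `A` is lower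
reachable from `x`. -/
theorem stmt4 {X : Type*} [Fintype X] [Nonempty X]
    (Q : (X → ℝ) → (X → ℝ)) (hQ : IsLTRO Q)
    (T : ℝ → (X → ℝ) → (X → ℝ)) (hT : IsSol Q T)
    (t : ℝ) (ht : 0 < t) (x : X) (A : Set X) :
    0 < T t (ind A) x ↔ lowerReach Q x A :=
  stmt4_general Q hQ T hT t ht x A
end
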